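/- arXiv:2309.15763 — 2 statements merged into one kernel-verified Lean document; each statement's English description precedes it below -/
import Mathlib

section
/- Let CS be an arbitrary constant specification for JNoC and let JNoC⁺_CS be JNoC_CS extended by the axiom schema s:⊤ for all terms s (where ⊤ abbreviates ¬⊥). Then JNoC⁺_CS proves ¬(t:⊥) for every justification term t. -/
/-- Justification terms: constants, variables, application, sum, bang. -/
inductive Tm : Type
  | const : Nat → Tm
  | var   : Nat → Tm
  | app   : Tm → Tm → Tm
  | sum   : Tm → Tm → Tm
  | bang  : Tm → Tm

/-- Formulas of justification logic. -/
inductive Fm : Type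
  | prop : Nat → Fm
  | bot  : Fm
  | imp  : Fm → Fm → Fm
  | just : Tm → Fm → Fm

/-- ¬A := A → ⊥ -/
def Fm.neg (A : Fm) : Fm := Fm.imp A Fm.bot
/-- ⊤ := ¬⊥ -/
def Fm.top : Fm := Fm.neg Fm.bot
/-- A ∨ B := ¬A → B -/
def Fm.disj (A B : Fm) : Fm := Fm.imp (Fm.neg A) B
/-- A ∧ B := ¬(A → ¬B) -/
def Fm.conj (A B : Fm) : Fm := Fm.neg (Fm.imp A (Fm.neg B))

/-- A classical propositional tautology in this language: true under every
Boolean valuation that respects ⊥ and →, treating `t:F` and atoms as arbitrary atoms. -/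
def IsTaut (A : Fm) : Prop :=
  ∀ v : Fm → Bool,
    v Fm.bot = false →
    (∀ F G : Fm, v (Fm.imp F G) = (!(v F) || v G)) →
    v A = true

/-- !^n t -/
def bangIter : Nat → Tm → Tm
  | 0, t => t
  | n + 1, t => Tm.bang (bangIter n t)

/-- `anFm n c A` is the formula !^n c : !^{n-1} c : ... : !c : c : A. -/
def anFm : Nat → Tm → Fm → Fm
  | 0, c, A => Fm.just c A
  | n + 1, c, A => Fm.just (bangIter (n + 1) c) (anFm n c A)

/-- Axioms of JD: classical tautologies, j+, j, jd. -/
inductive JDAxiom : Fm → Prop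
  | cl {A : Fm} : IsTaut A → JDAxiom A
  | jplus (s t : Tm) (A : Fm) :
      JDAxiom (Fm.imp (Fm.disj (Fm.just s A) (Fm.just t A)) (Fm.just (Tm.sum s t) A))
  | j (s t : Tm) (A B : Fm) :
      JDAxiom (Fm.imp (Fm.just s (Fm.imp A B)) (Fm.imp (Fm.just t A) (Fm.just (Tm.app s t) B)))
  | jd (t : Tm) : JDAxiom (Fm.neg (Fm.just t Fm.bot))

/-- Axioms of JNoC: classical tautologies, j+, j, noc. -/
inductive JNoCAxiom : Fm → Prop
  | cl {A : Fm} : IsTaut A → JNoCAxiom A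
  | jplus (s t : Tm) (A : Fm) :
      JNoCAxiom (Fm.imp (Fm.disj (Fm.just s A) (Fm.just t A)) (Fm.just (Tm.sum s t) A))
  | j (s t : Tm) (A B : Fm) :
      JNoCAxiom (Fm.imp (Fm.just s (Fm.imp A B)) (Fm.imp (Fm.just t A) (Fm.just (Tm.app s t) B)))
  | noc (t : Tm) (A : Fm) :
      JNoCAxiom (Fm.neg (Fm.conj (Fm.just t A) (Fm.just t (Fm.neg A))))

/-- A constant specification for the logic with axioms `Ax`: a set of pairs (c, A)
where c is (the index of) a constant and A is an axiom. -/
def IsConstSpec (Ax : Fm → Prop) (CS : Set (Nat × Fm)) : Prop :=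
  ∀ p ∈ CS, Ax p.2

/-- CS is axiomatically appropriate: every axiom is justified by some constant. -/
def AxAppropriate (Ax : Fm → Prop) (CS : Set (Nat × Fm)) : Prop :=
  ∀ A : Fm, Ax A → ∃ c : Nat, (c, A) ∈ CS

/-- Hilbert-style derivability from axioms `Ax`, modus ponens, and axiom necessitation. -/
inductive Deriv (Ax : Fm → Prop) (CS : Set (Nat × Fm)) : Fm → Prop
  | ax {A : Fm} : Ax A → Deriv Ax CS A
  | mp {A B : Fm} : Deriv Ax CS (Fm.imp A B) → Deriv Ax CS A → Deriv Ax CS B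
  | an {c : Nat} {A : Fm} (n : Nat) : (c, A) ∈ CS → Deriv Ax CS (anFm n (Tm.const c) A)

/-- A subset-model frame: worlds, normal worlds, valuation, evidence function. -/
structure SModel where
  W : Type
  W0 : Set W
  V : W → Fm → Prop
  E : W → Tm → Set W

/-- Truth set [A]. -/
def SModel.ts (M : SModel) (A : Fm) : Set M.W := {w : M.W | M.V w A}

/-- APP_ω(s,t). -/
def SModel.APP (M : SModel) (ω : M.W) (s t : Tm) : Set Fm :=
  {F : Fm | ∃ H : Fm, M.E ω s ⊆ M.ts (Fm.imp H F) ∧ M.E ω t ⊆ M.ts H}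

/-- The conditions common to general, D-arbitrary and NoC CS-subset models. -/
def CoreConds (CS : Set (Nat × Fm)) (M : SModel) : Prop :=
  M.W0.Nonempty ∧
  ∀ ω ∈ M.W0,
    (¬ M.V ω Fm.bot) ∧
    (∀ F G : Fm, M.V ω (Fm.imp F G) ↔ (¬ M.V ω F ∨ M.V ω G)) ∧
    (∀ (t : Tm) (F : Fm), M.V ω (Fm.just t F) ↔ M.E ω t ⊆ M.ts F) ∧
    (∀ s t : Tm, M.E ω (Tm.sum s t) ⊆ M.E ω s ∩ M.E ω t) ∧
    (∀ s t : Tm, M.E ω (Tm.app s t) ⊆ {υ : M.W | ∀ F ∈ M.APP ω s t, υ ∈ M.ts F}) ∧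
    (∀ (c : Nat) (A : Fm), (c, A) ∈ CS →
      M.E ω (Tm.const c) ⊆ M.ts A ∧
      ∀ n : Nat, M.E ω (bangIter (n + 1) (Tm.const c)) ⊆ M.ts (anFm n (Tm.const c) A))

/-- General CS-subset model: every E(ω,t) meets the normal worlds. -/
def IsGeneralModel (CS : Set (Nat × Fm)) (M : SModel) : Prop :=
  CoreConds CS M ∧ ∀ ω ∈ M.W0, ∀ t : Tm, ∃ υ ∈ M.W0, υ ∈ M.E ω t

/-- D-arbitrary CS-subset model: every E(ω,t) meets W_{¬⊥}. -/
def IsDArbModel (CS : Set (Nat × Fm)) (M : SModel) : Prop :=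
  CoreConds CS M ∧ ∀ ω ∈ M.W0, ∀ t : Tm, ∃ υ : M.W, ¬ M.V υ Fm.bot ∧ υ ∈ M.E ω t

/-- NoC CS-subset model: every E(ω,t) meets W_nc. -/
def IsNoCModel (CS : Set (Nat × Fm)) (M : SModel) : Prop :=
  CoreConds CS M ∧ ∀ ω ∈ M.W0, ∀ t : Tm,
    ∃ υ : M.W, (∀ A : Fm, ¬ M.V υ A ∨ ¬ M.V υ (Fm.neg A)) ∧ υ ∈ M.E ω t

def GeneralValid (CS : Set (Nat × Fm)) (F : Fm) : Prop :=
  ∀ M : SModel, IsGeneralModel CS M → ∀ ω ∈ M.W0, M.V ω F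

def DArbValid (CS : Set (Nat × Fm)) (F : Fm) : Prop :=
  ∀ M : SModel, IsDArbModel CS M → ∀ ω ∈ M.W0, M.V ω F

def NoCValid (CS : Set (Nat × Fm)) (F : Fm) : Prop :=
  ∀ M : SModel, IsNoCModel CS M → ∀ ω ∈ M.W0, M.V ω F

/-- Γ is consistent: no finite list of members of Γ lets the logic derive ⊥
(i.e. A₁ → ... → Aₙ → ⊥ is not derivable for A₁,...,Aₙ ∈ Γ). -/
def ConsistentSet (Ax : Fm → Prop) (CS : Set (Nat × Fm)) (Γ : Set Fm) : Prop :=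
  ¬ ∃ L : List Fm, (∀ A ∈ L, A ∈ Γ) ∧ Deriv Ax CS (L.foldr Fm.imp Fm.bot)

/-- Maximal consistent: consistent and every proper superset is inconsistent. -/
def MaxConsistent (Ax : Fm → Prop) (CS : Set (Nat × Fm)) (Γ : Set Fm) : Prop :=
  ConsistentSet Ax CS Γ ∧ ∀ Δ : Set Fm, Γ ⊂ Δ → ¬ ConsistentSet Ax CS Δ

/-- The canonical model: worlds are arbitrary sets of formulas, normal worlds are
the maximal consistent sets, V^C(Γ,F)=1 iff F ∈ Γ, E^C(Γ,t) = {Δ : Δ ⊇ Γ/t}. -/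
def canonicalModel (Ax : Fm → Prop) (CS : Set (Nat × Fm)) : SModel where
  W := Set Fm
  W0 := {Γ : Set Fm | MaxConsistent Ax CS Γ}
  V := fun Γ F => F ∈ Γ
  E := fun Γ t => {Δ : Set Fm | {F : Fm | Fm.just t F ∈ Γ} ⊆ Δ}

/-- JNoC⁺_CS: JNoC_CS extended by the axiom schema s:⊤ for all terms s. -/
def JNoCPlusAxiom : Fm → Prop :=
  fun A => JNoCAxiom A ∨ ∃ s : Tm, A = Fm.just s Fm.top

theorem isTaut_neg_conj_imp_imp_neg (A B : Fm) :
    IsTaut (Fm.imp (Fm.neg (Fm.conj A B)) (Fm.imp B (Fm.neg A))) := by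
  intro v hbot himp
  simp only [Fm.neg, Fm.conj, himp, hbot]
  cases v A <;> cases v B <;> rfl

theorem stmt_16_general (CS : Set (Nat × Fm))
    (t : Tm) :
    Deriv JNoCPlusAxiom CS (Fm.neg (Fm.just t Fm.bot)) :=
  have taut := Deriv.ax (Or.inl (JNoCAxiom.cl (isTaut_neg_conj_imp_imp_neg
    (Fm.just t Fm.bot) (Fm.just t Fm.top))))
  have noc := Deriv.ax (Or.inl (JNoCAxiom.noc t Fm.bot))
  have top := Deriv.ax (Or.inr ⟨t, rfl⟩)
  taut.mp noc |>.mp top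

/-- For arbitrary CS for JNoC, JNoC⁺_CS proves ¬(t:⊥) for every term t. -/
theorem stmt_16 (CS : Set (Nat × Fm)) (hCS : IsConstSpec JNoCAxiom CS)
    (t : Tm) :
    Deriv JNoCPlusAxiom CS (Fm.neg (Fm.just t Fm.bot)) :=
  stmt_16_general CS t
end

section
/- Let CS be an arbitrary constant specification. In every NoC CS-subset model M = (W, W₀, V, E), for every normal world ω ∈ W₀, every term t, and every formula A, it is not the case that both V(ω, t:A) = 1 and V(ω, t:¬A) = 1; that is, the axiom noc ¬(t:A ∧ t:¬A) holds at every normal world. -/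
theorem CoreConds.just_iff {CS : Set (Nat × Fm)} {M : SModel} (hM : CoreConds CS M)
    {ω : M.W} (hω : ω ∈ M.W0) (t : Tm) (F : Fm) :
    M.V ω (Fm.just t F) ↔ M.E ω t ⊆ M.ts F :=
  (hM.2 ω hω).2.2.1 t F

theorem SModel.not_subset_ts_and_subset_ts_neg {M : SModel} {S : Set M.W} {υ : M.W}
    (hυ : ∀ A : Fm, ¬ M.V υ A ∨ ¬ M.V υ (Fm.neg A)) (hmem : υ ∈ S) (A : Fm) :
    ¬ (S ⊆ M.ts A ∧ S ⊆ M.ts (Fm.neg A)) := by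
  rintro ⟨hA, hnegA⟩
  exact (hυ A).elim (· (hA hmem)) (· (hnegA hmem))

/-- In every NoC CS-subset model, at every normal world ω it is not the case that
both V(ω, t:A) = 1 and V(ω, t:¬A) = 1: the axiom noc holds at every normal world. -/
theorem stmt_18 (CS : Set (Nat × Fm)) (M : SModel) (hM : IsNoCModel CS M)
    (ω : M.W) (hω : ω ∈ M.W0) (t : Tm) (A : Fm) :
    ¬ (M.V ω (Fm.just t A) ∧ M.V ω (Fm.just t (Fm.neg A))) := by
  obtain ⟨υ, hυ, hmem⟩ := hM.2 ω hω t
  rw [hM.1.just_iff hω, hM.1.just_iff hω]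
  exact M.not_subset_ts_and_subset_ts_neg hυ hmem A
end
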